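/- Let E(s)(x) = ∑_{ρ ∈ s→} f_ρ(x) where each f_ρ is either a nonnegative constant or a monomial c_ρ ∏_i x_i^{a_{ρi}} with c_ρ > 0 and total degree a_ρ > 0, and let x_m ∈ (0,∞)^n. Then -E(s)(x) ≥ K - ∑_{i=1}^n ∑_{ρ parametric} (f_ρ(x_m) · a_{ρi} / (a_ρ · x_{mi}^{a_ρ})) · x_i^{a_ρ}, where K is the constant -∑_{ρ constant} f_ρ - ... chosen so that equality holds at x = x_m. -/

import Mathlib

/-!
Each parametric transition `c ∏ xᵢ^{aᵢ}` (degree `N = ∑ aᵢ > 0`) is bounded above by writing it as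
`c ∏ xmᵢ^{aᵢ} · ∏ (xᵢ / xmᵢ)^{aᵢ}` and applying weighted AM-GM with weights `aᵢ / N` to the numbers
`(xᵢ / xmᵢ)^N`. The resulting separable majorant coincides with the monomial at `x = xm`, and constant
transitions contribute the same constant at every `x`, which goes into `K`.
-/

open Finset

theorem Real.prod_pow_le_sum_mul_pow_sum {κ : Type*} (s : Finset κ) (a : κ → ℕ)
    (ha : 0 < ∑ i ∈ s, a i) (t : κ → ℝ) (ht : ∀ i ∈ s, 0 ≤ t i) :
    ∏ i ∈ s, t i ^ a i ≤ ∑ i ∈ s, (a i : ℝ) / (∑ j ∈ s, a j : ℕ) * t i ^ (∑ j ∈ s, a j) := by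
  set N := ∑ j ∈ s, a j
  have hN_pos : (0 : ℝ) < N := by exact_mod_cast ha
  have hweights : ∑ i ∈ s, (a i : ℝ) / N = 1 := by
    rw [← sum_div, ← Nat.cast_sum, div_self hN_pos.ne']
  calc ∏ i ∈ s, t i ^ a i = ∏ i ∈ s, (t i ^ N) ^ ((a i : ℝ) / N) := by
        refine prod_congr rfl fun i hi => ?_
        rw [← Real.rpow_natCast (t i) N, ← Real.rpow_mul (ht i hi), mul_div_cancel₀ _ hN_pos.ne',
          Real.rpow_natCast]
    _ ≤ ∑ i ∈ s, (a i : ℝ) / N * t i ^ N :=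
        Real.geom_mean_le_arith_mean_weighted s _ _ (fun i _ => by positivity) hweights
          fun i hi => pow_nonneg (ht i hi) N

section Majorant

variable {κ : Type*} [Fintype κ]

noncomputable def amgmMajorant (c : ℝ) (a : κ → ℕ) (xm x : κ → ℝ) : ℝ :=
  ∑ i, (c * ∏ j, xm j ^ a j) * (a i : ℝ) / ((∑ j, a j : ℕ) * xm i ^ (∑ j, a j)) *
    x i ^ (∑ j, a j)

theorem mul_prod_pow_le_amgmMajorant {c : ℝ} (hc : 0 ≤ c) {a : κ → ℕ} (ha : 0 < ∑ i, a i)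
    {xm x : κ → ℝ} (hxm : ∀ i, 0 < xm i) (hx : ∀ i, 0 ≤ x i) :
    c * ∏ i, x i ^ a i ≤ amgmMajorant c a xm x := by
  have hxm_prod : 0 ≤ ∏ j, xm j ^ a j := prod_nonneg fun j _ => pow_nonneg (hxm j).le _
  calc c * ∏ i, x i ^ a i = (c * ∏ j, xm j ^ a j) * ∏ i, (x i / xm i) ^ a i := by
        rw [mul_assoc, ← prod_mul_distrib]
        congr 1
        refine prod_congr rfl fun i _ => ?_
        rw [div_pow, mul_div_cancel₀ _ (pow_ne_zero _ (hxm i).ne')]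
    _ ≤ (c * ∏ j, xm j ^ a j) *
          ∑ i, (a i : ℝ) / (∑ j, a j : ℕ) * (x i / xm i) ^ (∑ j, a j) :=
        mul_le_mul_of_nonneg_left
          (Real.prod_pow_le_sum_mul_pow_sum _ a ha _ fun i _ => div_nonneg (hx i) (hxm i).le)
          (mul_nonneg hc hxm_prod)
    _ = amgmMajorant c a xm x := by
        rw [amgmMajorant, mul_sum]
        refine sum_congr rfl fun i _ => ?_
        have := pow_ne_zero (∑ j, a j) (hxm i).ne'
        rw [div_pow]
        field_simp

theorem amgmMajorant_self (c : ℝ) {a : κ → ℕ} (ha : 0 < ∑ i, a i) {xm : κ → ℝ}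
    (hxm : ∀ i, xm i ≠ 0) :
    amgmMajorant c a xm xm = c * ∏ i, xm i ^ a i := by
  have hN : ((∑ j, a j : ℕ) : ℝ) ≠ 0 := by exact_mod_cast ha.ne'
  calc amgmMajorant c a xm xm = (c * ∏ j, xm j ^ a j) * ((∑ i, (a i : ℝ)) / (∑ j, a j : ℕ)) := by
        rw [amgmMajorant, sum_div, mul_sum]
        refine sum_congr rfl fun i _ => ?_
        have := pow_ne_zero (∑ j, a j) (hxm i)
        field_simp
    _ = c * ∏ i, xm i ^ a i := by rw [← Nat.cast_sum, div_self hN, mul_one]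

end Majorant

theorem sum_mul_prod_pow_eq_sum_filter_add_sum_filter {ι κ : Type*} [Fintype ι] [Fintype κ]
    (c : ι → ℝ) (a : ι → κ → ℕ) (x : κ → ℝ) :
    ∑ ρ, c ρ * ∏ i, x i ^ a ρ i =
      ∑ ρ ∈ univ.filter (fun ρ => 0 < ∑ i, a ρ i), c ρ * ∏ i, x i ^ a ρ i +
        ∑ ρ ∈ univ.filter (fun ρ => ¬ 0 < ∑ i, a ρ i), c ρ := by
  rw [← sum_filter_add_sum_filter_not univ (fun ρ => 0 < ∑ i, a ρ i)]
  congr 1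
  refine sum_congr rfl fun ρ hρ => ?_
  have hdeg : ∑ i, a ρ i = 0 := by simpa using (mem_filter.mp hρ).2
  rw [prod_eq_one fun i _ => by rw [sum_eq_zero_iff.mp hdeg i (mem_univ i), pow_zero], mul_one]

theorem exit_rate_minorization_general (n : ℕ) {ι : Type*} [Fintype ι]
    (c : ι → ℝ) (a : ι → Fin n → ℕ)
    (hc : ∀ ρ, 0 ≤ c ρ)
    (xm : Fin n → ℝ) (hxm : ∀ i, 0 < xm i) :
    ∃ K : ℝ,
      (∀ x : Fin n → ℝ, (∀ i, 0 < x i) →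
        -(∑ ρ, c ρ * ∏ i, x i ^ a ρ i) ≥
          K - ∑ i, ∑ ρ ∈ Finset.univ.filter (fun ρ => 0 < ∑ i, a ρ i),
            (c ρ * ∏ j, xm j ^ a ρ j) * (a ρ i : ℝ) /
              ((∑ j, a ρ j : ℕ) * xm i ^ (∑ j, a ρ j)) * x i ^ (∑ j, a ρ j)) ∧
      -(∑ ρ, c ρ * ∏ i, xm i ^ a ρ i) =
          K - ∑ i, ∑ ρ ∈ Finset.univ.filter (fun ρ => 0 < ∑ i, a ρ i),
            (c ρ * ∏ j, xm j ^ a ρ j) * (a ρ i : ℝ) /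
              ((∑ j, a ρ j : ℕ) * xm i ^ (∑ j, a ρ j)) * xm i ^ (∑ j, a ρ j) := by
  refine ⟨-∑ ρ ∈ univ.filter (fun ρ => ¬ 0 < ∑ i, a ρ i), c ρ, fun x hx => ?_, ?_⟩
  · have hle : ∑ ρ ∈ univ.filter (fun ρ => 0 < ∑ i, a ρ i), c ρ * ∏ i, x i ^ a ρ i ≤
        ∑ ρ ∈ univ.filter (fun ρ => 0 < ∑ i, a ρ i), amgmMajorant (c ρ) (a ρ) xm x :=
      sum_le_sum fun ρ hρ =>
        mul_prod_pow_le_amgmMajorant (hc ρ) (mem_filter.mp hρ).2 hxm fun i => (hx i).le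
    rw [sum_comm, sum_mul_prod_pow_eq_sum_filter_add_sum_filter]
    simp only [amgmMajorant] at hle
    linarith
  · have heq : ∑ ρ ∈ univ.filter (fun ρ => 0 < ∑ i, a ρ i), amgmMajorant (c ρ) (a ρ) xm xm =
        ∑ ρ ∈ univ.filter (fun ρ => 0 < ∑ i, a ρ i), c ρ * ∏ i, xm i ^ a ρ i :=
      sum_congr rfl fun ρ hρ =>
        amgmMajorant_self (c ρ) (mem_filter.mp hρ).2 fun i => (hxm i).ne'
    rw [sum_comm, sum_mul_prod_pow_eq_sum_filter_add_sum_filter]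
    simp only [amgmMajorant] at heq
    linarith

theorem exit_rate_minorization (n : ℕ) {ι : Type*} [Fintype ι] [DecidableEq ι]
    (c : ι → ℝ) (a : ι → Fin n → ℕ)
    (hc : ∀ ρ, 0 ≤ c ρ)
    (hcp : ∀ ρ, 0 < ∑ i, a ρ i → 0 < c ρ)
    (xm : Fin n → ℝ) (hxm : ∀ i, 0 < xm i) :
    ∃ K : ℝ,
      (∀ x : Fin n → ℝ, (∀ i, 0 < x i) →
        -(∑ ρ, c ρ * ∏ i, x i ^ a ρ i) ≥
          K - ∑ i, ∑ ρ ∈ Finset.univ.filter (fun ρ => 0 < ∑ i, a ρ i),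
            (c ρ * ∏ j, xm j ^ a ρ j) * (a ρ i : ℝ) /
              ((∑ j, a ρ j : ℕ) * xm i ^ (∑ j, a ρ j)) * x i ^ (∑ j, a ρ j)) ∧
      -(∑ ρ, c ρ * ∏ i, xm i ^ a ρ i) =
          K - ∑ i, ∑ ρ ∈ Finset.univ.filter (fun ρ => 0 < ∑ i, a ρ i),
            (c ρ * ∏ j, xm j ^ a ρ j) * (a ρ i : ℝ) /
              ((∑ j, a ρ j : ℕ) * xm i ^ (∑ j, a ρ j)) * xm i ^ (∑ j, a ρ j) :=
  exit_rate_minorization_general n c a hc xm hxm
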